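/- (Fisher information for r in the normal-moment family with fixed mode; basis of the Jeffreys prior in equation (14).) Fix m > 0 and λ ≠ 0. Define ℓ(r) = log j(λ | m²/(2r), r) for r > 0, i.e. the log of the normal-moment density of order r whose scale is chosen so that the modes are at ±m. Then ℓ is twice differentiable in r on (0,∞), the second derivative does not depend on λ or m, and −ℓ''(r) = ψ₁(r + 1/2) − 1/r + 1/(2r²), where ψ₁ denotes the trigamma function (the second derivative of log Γ). -/

import Mathlib

/-!
With `τ² = m²/(2r)` the log-density is
`r log λ² − (r + 1/2)(log m² − log r) − log Γ(r + 1/2) − (λ²/m²) r`,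
whose `λ`- and `m`-dependent terms are affine in `r` and vanish after two derivatives.
Smoothness of `log Γ` on `(0, ∞)` comes from `Γ` being analytic away from its poles, as the
reciprocal of the entire function `1/Γ`.
-/

open Real MeasureTheory Filter

/-- Normal-moment density `j(λ | τ², r)` of order `r`, as a function of `τ² = τsq`. -/
noncomputable def normalMomentPdfSq (τsq r l : ℝ) : ℝ :=
  (l ^ 2) ^ r / ((2 * τsq) ^ (r + 1 / 2) * Real.Gamma (r + 1 / 2)) *
    Real.exp (-l ^ 2 / (2 * τsq))

/-- Trigamma function: the second derivative of `log Γ` on `(0, ∞)`. -/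
noncomputable def trigamma (x : ℝ) : ℝ :=
  deriv (deriv (fun y : ℝ => Real.log (Real.Gamma y))) x

theorem Complex.analyticAt_Gamma {s : ℂ} (hs : ∀ n : ℕ, s ≠ -n) :
    AnalyticAt ℂ Complex.Gamma s := by
  have hinv := Complex.differentiable_one_div_Gamma.analyticAt s
  have h := hinv.inv (inv_ne_zero (Complex.Gamma_ne_zero hs))
  simpa only [one_div, Pi.inv_def, inv_inv] using h

theorem Real.analyticAt_Gamma {x : ℝ} (hx : ∀ n : ℕ, x ≠ -n) : AnalyticAt ℝ Real.Gamma x := by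
  have hC : AnalyticAt ℂ Complex.Gamma (x : ℂ) :=
    Complex.analyticAt_Gamma fun n h => hx n (by exact_mod_cast h)
  have hre : AnalyticAt ℝ (fun y : ℝ => (Complex.Gamma y).re) x :=
    (Complex.reCLM.analyticAt _).comp (hC.restrictScalars.comp (Complex.ofRealCLM.analyticAt x))
  simpa only [Complex.Gamma_ofReal, Complex.ofReal_re] using hre

theorem Real.analyticAt_log_Gamma {x : ℝ} (hx : 0 < x) :
    AnalyticAt ℝ (fun y => log (Gamma y)) x :=
  (analyticAt_log (Gamma_pos_of_pos hx)).comp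
    (Real.analyticAt_Gamma fun n => by linarith [(Nat.cast_nonneg n : (0 : ℝ) ≤ n)])

noncomputable def digamma (x : ℝ) : ℝ :=
  deriv (fun y : ℝ => log (Gamma y)) x

theorem hasDerivAt_log_Gamma {x : ℝ} (hx : 0 < x) :
    HasDerivAt (fun y => log (Gamma y)) (digamma x) x :=
  (analyticAt_log_Gamma hx).differentiableAt.hasDerivAt

theorem hasDerivAt_digamma {x : ℝ} (hx : 0 < x) : HasDerivAt digamma (trigamma x) x :=
  (analyticAt_log_Gamma hx).deriv.differentiableAt.hasDerivAt

theorem log_normalMomentPdfSq {τsq r l : ℝ} (hτ : 0 < τsq) (hr : 0 < r + 1 / 2) (hl : l ≠ 0) :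
    log (normalMomentPdfSq τsq r l) =
      r * log (l ^ 2) - (r + 1 / 2) * log (2 * τsq) - log (Gamma (r + 1 / 2))
        - l ^ 2 / (2 * τsq) := by
  have hΓ := Gamma_pos_of_pos hr
  rw [normalMomentPdfSq, log_mul (by positivity) (exp_ne_zero _), log_div (by positivity)
    (by positivity), log_mul (by positivity) hΓ.ne', log_rpow (by positivity),
    log_rpow (by positivity), log_exp]
  ring

theorem log_normalMomentPdfSq_mode {m l s : ℝ} (hm : m ≠ 0) (hl : l ≠ 0) (hs : 0 < s) :
    log (normalMomentPdfSq (m ^ 2 / (2 * s)) s l) =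
      s * log (l ^ 2) - (s + 1 / 2) * (log (m ^ 2) - log s) - log (Gamma (s + 1 / 2))
        - l ^ 2 / m ^ 2 * s := by
  have h2τ : 2 * (m ^ 2 / (2 * s)) = m ^ 2 / s := by field_simp
  rw [log_normalMomentPdfSq (by positivity) (by linarith) hl, h2τ,
    log_div (by positivity) hs.ne']
  field_simp

/-- The score `∂/∂r log j(λ | m²/(2r), r)`. -/
noncomputable def normalMomentModeScore (m l r : ℝ) : ℝ :=
  log (l ^ 2) - log (m ^ 2) + log r + 1 + 1 / (2 * r) - digamma (r + 1 / 2) - l ^ 2 / m ^ 2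

theorem hasDerivAt_log_normalMomentPdfSq_mode {m l r : ℝ} (hm : m ≠ 0) (hl : l ≠ 0)
    (hr : 0 < r) :
    HasDerivAt (fun s => log (normalMomentPdfSq (m ^ 2 / (2 * s)) s l))
      (normalMomentModeScore m l r) r := by
  have heq : (fun s => log (normalMomentPdfSq (m ^ 2 / (2 * s)) s l)) =ᶠ[nhds r]
      fun s => s * log (l ^ 2) - (s + 1 / 2) * (log (m ^ 2) - log s)
        - log (Gamma (s + 1 / 2)) - l ^ 2 / m ^ 2 * s := by
    filter_upwards [eventually_gt_nhds hr] with s hs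
    exact log_normalMomentPdfSq_mode hm hl hs
  have hshift := (hasDerivAt_id' r).add_const (1 / 2 : ℝ)
  have hderiv := ((((hasDerivAt_id' r).mul_const (log (l ^ 2))).sub
    (hshift.mul ((hasDerivAt_const r (log (m ^ 2))).sub (hasDerivAt_log hr.ne')))).sub
    ((hasDerivAt_log_Gamma (by linarith)).comp r hshift)).sub
    ((hasDerivAt_id' r).const_mul (l ^ 2 / m ^ 2))
  refine heq.hasDerivAt_iff.mpr (hderiv.congr_deriv ?_)
  simp only [normalMomentModeScore, Pi.sub_apply]
  field_simp
  ring

theorem hasDerivAt_normalMomentModeScore (m l : ℝ) {r : ℝ} (hr : 0 < r) :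
    HasDerivAt (normalMomentModeScore m l) (1 / r - 1 / (2 * r ^ 2) - trigamma (r + 1 / 2)) r := by
  have hshift := (hasDerivAt_id' r).add_const (1 / 2 : ℝ)
  have hderiv := (((((hasDerivAt_const r (log (l ^ 2) - log (m ^ 2))).add
    (hasDerivAt_log hr.ne')).add_const 1).add
    ((hasDerivAt_const r 1).div ((hasDerivAt_id' r).const_mul 2) (by positivity))).sub
    ((hasDerivAt_digamma (by linarith)).comp r hshift)).sub_const (l ^ 2 / m ^ 2)
  refine hderiv.congr_deriv ?_
  field_simp
  ring

/-- Fisher information for `r` in the normal-moment family with fixed mode `m`: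
with `ℓ(r) = log j(λ | m²/(2r), r)`, `ℓ` is twice differentiable on `(0, ∞)` and
`−ℓ''(r) = ψ₁(r + 1/2) − 1/r + 1/(2r²)`, independent of `λ` and `m`. -/
theorem normal_moment_fisher_information (m lam : ℝ) (hm : 0 < m) (hlam : lam ≠ 0) :
    ∃ ℓ' ℓ'' : ℝ → ℝ,
      (∀ r : ℝ, 0 < r →
        HasDerivAt (fun s : ℝ => Real.log (normalMomentPdfSq (m ^ 2 / (2 * s)) s lam))
          (ℓ' r) r) ∧
      (∀ r : ℝ, 0 < r → HasDerivAt ℓ' (ℓ'' r) r) ∧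
      (∀ r : ℝ, 0 < r →
        -ℓ'' r = trigamma (r + 1 / 2) - 1 / r + 1 / (2 * r ^ 2)) :=
  ⟨normalMomentModeScore m lam, fun r => 1 / r - 1 / (2 * r ^ 2) - trigamma (r + 1 / 2),
    fun _ hr => hasDerivAt_log_normalMomentPdfSq_mode hm.ne' hlam hr,
    fun _ hr => hasDerivAt_normalMomentModeScore m lam hr,
    fun _ _ => by ring⟩
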